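/- For every integer n ≥ 2, one has the polynomial identity B_{α_{2n}}(t) = (2t+1)·B_{α_{2(n−1)}}(t) − t^2·B_{α_{2(n−2)}}(t) in ℤ[t], where α_{2k} = (2^{2k}−1)/3 is the 2k-th Jacobsthal number. -/
import Mathlib

open Polynomial

/-- The Stern polynomials: `B 0 = 0`, `B 1 = 1`, `B (2n) = t * B n`,
`B (2n+1) = B n + B (n+1)`. -/
noncomputable def sternPoly : ℕ → Polynomial ℤ
  | 0 => 0
  | 1 => 1
  | n + 2 =>
    if h : (n + 2) % 2 = 0 then X * sternPoly ((n + 2) / 2)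
    else sternPoly ((n + 2) / 2) + sternPoly ((n + 2) / 2 + 1)
decreasing_by all_goals omega

/-- The `m`-th Jacobsthal number `α m = (2^m - (-1)^m)/3`. -/
def jacobsthal (m : ℕ) : ℕ := (((2 : ℤ) ^ m - (-1) ^ m) / 3).toNat

lemma stern_even (m : ℕ) : sternPoly (2 * m) = X * sternPoly m := by
  match m with
  | 0 => simp [sternPoly]
  | m + 1 =>
    have h : 2 * (m + 1) = 2 * m + 2 := by ring
    rw [h, sternPoly]
    have h2 : (2 * m + 2) % 2 = 0 := by omega
    have h3 : (2 * m + 2) / 2 = m + 1 := by omega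
    simp [h2, h3]

lemma stern_odd (m : ℕ) (hm : 1 ≤ m) :
    sternPoly (2 * m + 1) = sternPoly m + sternPoly (m + 1) := by
  obtain ⟨m, rfl⟩ := Nat.exists_eq_add_of_le hm
  have h : 2 * (1 + m) + 1 = 2 * m + 1 + 2 := by ring
  rw [h, sternPoly]
  have h2 : (2 * m + 1 + 2) % 2 = 1 := by omega
  have h3 : (2 * m + 1 + 2) / 2 = 1 + m := by omega
  simp [h2, h3]

lemma three_dvd (k : ℕ) : (3 : ℤ) ∣ 4 ^ k - 1 := by
  have h : (4 : ℤ) ^ k ≡ 1 [ZMOD 3] := by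
    simpa using Int.ModEq.pow k (by decide : (4 : ℤ) ≡ 1 [ZMOD 3])
  exact h.symm.dvd

lemma jac_val (k : ℕ) : 3 * jacobsthal (2 * k) + 1 = 4 ^ k := by
  have h1 : (-1 : ℤ) ^ (2 * k) = 1 := by
    rw [pow_mul]; norm_num
  have h2 : (2 : ℤ) ^ (2 * k) = 4 ^ k := by
    rw [pow_mul]; norm_num
  have hd := three_dvd k
  have h3 : (3 : ℤ) * (((4 : ℤ) ^ k - 1) / 3) = 4 ^ k - 1 := Int.mul_ediv_cancel' hd
  have hpos : (0 : ℤ) ≤ ((4 : ℤ) ^ k - 1) / 3 := by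
    apply Int.ediv_nonneg _ (by norm_num)
    have : (1 : ℤ) ≤ 4 ^ k := one_le_pow₀ (by norm_num)
    omega
  have : (jacobsthal (2 * k) : ℤ) = ((4 : ℤ) ^ k - 1) / 3 := by
    rw [jacobsthal, h1, h2, Int.toNat_of_nonneg hpos]
  have h4 : (3 : ℤ) * (jacobsthal (2 * k) : ℤ) + 1 = 4 ^ k := by rw [this]; omega
  have h5 : ((4 : ℕ) ^ k : ℤ) = (4 : ℤ) ^ k := by push_cast; ring
  exact_mod_cast h4.trans h5.symm

lemma jac_succ (k : ℕ) : jacobsthal (2 * (k + 1)) = 4 * jacobsthal (2 * k) + 1 := by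
  have h1 := jac_val k
  have h2 := jac_val (k + 1)
  have : (4 : ℕ) ^ (k + 1) = 4 * 4 ^ k := pow_succ' 4 k
  omega

lemma jac_zero : jacobsthal 0 = 0 := by decide
lemma jac_two : jacobsthal 2 = 1 := by decide

lemma L1 (k : ℕ) : sternPoly (jacobsthal (2 * (k + 1))) =
    (X + 1) * sternPoly (jacobsthal (2 * k)) + sternPoly (jacobsthal (2 * k) + 1) := by
  rw [jac_succ]
  rcases Nat.eq_zero_or_pos (jacobsthal (2 * k)) with h | h
  · rw [h]
    norm_num [sternPoly]
  · set m := jacobsthal (2 * k)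
    have h1 : 4 * m + 1 = 2 * (2 * m) + 1 := by ring
    rw [h1, stern_odd _ (by omega)]
    rw [stern_even]
    have h2 : 2 * m + 1 = 2 * m + 1 := rfl
    rw [stern_odd _ h]
    ring

lemma L2 (k : ℕ) : sternPoly (jacobsthal (2 * (k + 1)) + 1) =
    X * (sternPoly (jacobsthal (2 * k)) + sternPoly (jacobsthal (2 * k) + 1)) := by
  rw [jac_succ]
  rcases Nat.eq_zero_or_pos (jacobsthal (2 * k)) with h | h
  · rw [h]
    have e : 4 * 0 + 1 + 1 = 2 * 1 := by norm_num
    rw [e, stern_even]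
    simp [sternPoly]
  · set m := jacobsthal (2 * k)
    have h1 : 4 * m + 1 + 1 = 2 * (2 * m + 1) := by ring
    rw [h1, stern_even, stern_odd _ h]

theorem stern_jacobsthal_recurrence (n : ℕ) (hn : 2 ≤ n) :
    sternPoly (jacobsthal (2 * n)) =
      (2 * X + 1) * sternPoly (jacobsthal (2 * (n - 1)))
        - X ^ 2 * sternPoly (jacobsthal (2 * (n - 2))) := by
  obtain ⟨k, rfl⟩ : ∃ k, n = k + 2 := ⟨n - 2, by omega⟩
  have e1 : k + 2 - 1 = k + 1 := by omega
  have e2 : k + 2 - 2 = k := by omega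
  rw [e1, e2]
  have h1 := L1 (k + 1)
  have h2 := L2 k
  have h3 := L1 k
  have hc : sternPoly (jacobsthal (2 * k) + 1) =
      sternPoly (jacobsthal (2 * (k + 1))) - (X + 1) * sternPoly (jacobsthal (2 * k)) := by
    rw [h3]; ring
  rw [show k + 1 + 1 = k + 2 from rfl] at h1
  rw [h1, h2, hc]
  ring
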